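/- arXiv:1404.1667 — 3 statements merged into one kernel-verified Lean document; each statement's English description precedes it below -/
import Mathlib

section
/- Suppose X is a symmetric solution of X A₀ + A₀^T X − X B R† B^T X + Q₀ = 0 with Q₀ positive semidefinite. Then ker X is invariant under A₀, i.e., A₀ (ker X) ⊆ ker X. -/
open Matrix

/-- The four Moore–Penrose conditions for `Rd` being the pseudo-inverse of `R`. -/
def IsMoorePenroseInv {m : ℕ} (R Rd : Matrix (Fin m) (Fin m) ℝ) : Prop :=
  R * Rd * R = R ∧ Rd * R * Rd = Rd ∧ (R * Rd)ᵀ = R * Rd ∧ (Rd * R)ᵀ = Rd * R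

/-!
Apply the Riccati equation to `v ∈ ker X`: the terms `Aᵀ X v` and `X K X v` vanish, leaving
`X A v + Q v = 0`. Pairing with `v` and using the symmetry of `X` kills `vᵀ X A v`, so
`vᵀ Q v = 0`; since `Q` is positive semidefinite this forces `Q v = 0`, hence `X A v = 0`.
-/

namespace Matrix

variable {α ι : Type*} [Fintype ι]

theorem riccati_mulVec_of_mulVec_eq_zero [CommRing α] (A X K Q : Matrix ι ι α) {v : ι → α}
    (hv : X *ᵥ v = 0) :
    (X * A + Aᵀ * X - X * K * X + Q) *ᵥ v = X *ᵥ (A *ᵥ v) + Q *ᵥ v := by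
  rw [add_mulVec, sub_mulVec, add_mulVec, ← mulVec_mulVec, ← mulVec_mulVec, ← mulVec_mulVec,
    hv, mulVec_zero, mulVec_zero, add_zero, sub_zero]

theorem dotProduct_mulVec_eq_zero_of_mulVec_eq_zero [CommSemiring α] {X : Matrix ι ι α}
    (hX : Xᵀ = X) {v : ι → α} (hv : X *ᵥ v = 0) (w : ι → α) : v ⬝ᵥ X *ᵥ w = 0 := by
  rw [dotProduct_mulVec, ← mulVec_transpose, hX, hv, zero_dotProduct]

theorem PosSemidef.mulVec_eq_zero_of_add_mulVec_eq_zero {X Q : Matrix ι ι ℝ} (hX : Xᵀ = X)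
    (hQ : Q.PosSemidef) {v w : ι → ℝ} (hv : X *ᵥ v = 0) (h : X *ᵥ w + Q *ᵥ v = 0) :
    Q *ᵥ v = 0 := by
  have hquad : v ⬝ᵥ Q *ᵥ v = 0 := by
    have := congrArg (v ⬝ᵥ ·) h
    simpa only [dotProduct_add, dotProduct_mulVec_eq_zero_of_mulVec_eq_zero hX hv w, zero_add,
      dotProduct_zero] using this
  exact (hQ.dotProduct_mulVec_zero_iff v).mp hquad

end Matrix

theorem kerX_A0_invariant_general {n m : ℕ}
    (A0 X Q0 : Matrix (Fin n) (Fin n) ℝ) (B : Matrix (Fin n) (Fin m) ℝ)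
    (Rd : Matrix (Fin m) (Fin m) ℝ)
    (hX : Xᵀ = X) (hQ0 : Q0.PosSemidef)
    (heq : X * A0 + A0ᵀ * X - X * B * Rd * Bᵀ * X + Q0 = 0) :
    ∀ v : Fin n → ℝ, X *ᵥ v = 0 → X *ᵥ (A0 *ᵥ v) = 0 := by
  intro v hv
  have hassoc : X * B * Rd * Bᵀ * X = X * (B * Rd * Bᵀ) * X := by simp only [Matrix.mul_assoc]
  have hsum : X *ᵥ (A0 *ᵥ v) + Q0 *ᵥ v = 0 := by
    rw [← riccati_mulVec_of_mulVec_eq_zero A0 X (B * Rd * Bᵀ) Q0 hv, ← hassoc, heq, zero_mulVec]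
  have hQv : Q0 *ᵥ v = 0 := hQ0.mulVec_eq_zero_of_add_mulVec_eq_zero hX hv hsum
  rwa [hQv, add_zero] at hsum

/-- If symmetric `X` solves `X A₀ + A₀ᵀ X − X B R† Bᵀ X + Q₀ = 0` with `Q₀` PSD,
then `ker X` is `A₀`-invariant. -/
theorem kerX_A0_invariant {n m : ℕ}
    (A0 X Q0 : Matrix (Fin n) (Fin n) ℝ) (B : Matrix (Fin n) (Fin m) ℝ)
    (R Rd : Matrix (Fin m) (Fin m) ℝ)
    (hX : Xᵀ = X) (hQ0sym : Q0ᵀ = Q0) (hQ0 : Q0.PosSemidef)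
    (hR : Rᵀ = R) (hRpsd : R.PosSemidef) (hMP : IsMoorePenroseInv R Rd)
    (heq : X * A0 + A0ᵀ * X - X * B * Rd * Bᵀ * X + Q0 = 0) :
    ∀ v : Fin n → ℝ, X *ᵥ v = 0 → X *ᵥ (A0 *ᵥ v) = 0 :=
  kerX_A0_invariant_general A0 X Q0 B Rd hX hQ0 heq
end

section
/- Suppose X is a symmetric solution of X A₀ + A₀^T X − X B R† B^T X + Q₀ = 0 with Q₀ positive semidefinite, and suppose X B G = 0 where G = I − R† R. Then Q₀ B G = 0. -/
open Matrix

/-!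
Put `V = B G`. Since `X V = 0` and `X` is symmetric, also `Vᵀ X = 0`, so sandwiching the Riccati
equation between `Vᵀ` and `V` kills every term containing `X` and leaves `Vᵀ Q₀ V = 0`. Writing
`Q₀ = Cᵀ C` this says `(C V)ᵀ (C V) = 0`, hence `C V = 0` and `Q₀ V = 0`.
-/

open scoped ComplexOrder

namespace Matrix

theorem conjTranspose_mul_mul_eq_zero_of_riccati {α : Type*} [Ring α] [StarRing α]
    {n m : Type*} [Fintype n] {A X K Q : Matrix n n α} {V : Matrix n m α}
    (hX : X.IsHermitian) (hric : X * A + Aᴴ * X - X * K * X + Q = 0) (hXV : X * V = 0) :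
    Vᴴ * Q * V = 0 := by
  have hVX : Vᴴ * X = 0 := by
    simpa only [conjTranspose_mul, hX.eq, conjTranspose_zero] using congrArg conjTranspose hXV
  have hVXY (Y : Matrix n m α) : Vᴴ * (X * Y) = 0 := by
    rw [← Matrix.mul_assoc, hVX, Matrix.zero_mul]
  rw [eq_neg_of_add_eq_zero_right hric]
  simp only [Matrix.mul_neg, Matrix.neg_mul, Matrix.mul_add, Matrix.add_mul, Matrix.mul_sub,
    Matrix.sub_mul, Matrix.mul_assoc, hXV, hVXY, Matrix.mul_zero, sub_zero, add_zero, neg_zero]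

theorem PosSemidef.mul_eq_zero_of_conjTranspose_mul_mul_eq_zero {𝕜 : Type*} [RCLike 𝕜]
    {n m : Type*} [Fintype n] {Q : Matrix n n 𝕜} (hQ : Q.PosSemidef) {V : Matrix n m 𝕜}
    (hV : Vᴴ * Q * V = 0) : Q * V = 0 := by
  classical
  open scoped MatrixOrder in
  obtain ⟨C, rfl⟩ := CStarAlgebra.nonneg_iff_eq_star_mul_self.mp hQ.nonneg
  have hCV : C * V = 0 := by
    rw [← conjTranspose_mul_self_eq_zero, conjTranspose_mul]
    simpa only [star_eq_conjTranspose, Matrix.mul_assoc] using hV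
  rw [star_eq_conjTranspose, Matrix.mul_assoc, hCV, Matrix.mul_zero]

end Matrix

theorem Q0_BG_eq_zero_general {n m : ℕ}
    (A0 X Q0 : Matrix (Fin n) (Fin n) ℝ) (B : Matrix (Fin n) (Fin m) ℝ)
    (R Rd : Matrix (Fin m) (Fin m) ℝ)
    (hX : Xᵀ = X) (hQ0 : Q0.PosSemidef)
    (heq : X * A0 + A0ᵀ * X - X * B * Rd * Bᵀ * X + Q0 = 0)
    (hXBG : X * B * (1 - Rd * R) = 0) :
    Q0 * B * (1 - Rd * R) = 0 := by
  have hXh : X.IsHermitian := (conjTranspose_eq_transpose_of_trivial X).trans hX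
  have hric : X * A0 + A0ᴴ * X - X * (B * Rd * Bᵀ) * X + Q0 = 0 := by
    simpa only [conjTranspose_eq_transpose_of_trivial, Matrix.mul_assoc] using heq
  rw [Matrix.mul_assoc] at hXBG ⊢
  exact hQ0.mul_eq_zero_of_conjTranspose_mul_mul_eq_zero
    (conjTranspose_mul_mul_eq_zero_of_riccati hXh hric hXBG)

/-- If symmetric `X` solves `X A₀ + A₀ᵀ X − X B R† Bᵀ X + Q₀ = 0` with `Q₀` PSD and
`X B G = 0` where `G = I − R† R`, then `Q₀ B G = 0`. -/
theorem Q0_BG_eq_zero {n m : ℕ}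
    (A0 X Q0 : Matrix (Fin n) (Fin n) ℝ) (B : Matrix (Fin n) (Fin m) ℝ)
    (R Rd : Matrix (Fin m) (Fin m) ℝ)
    (hX : Xᵀ = X) (hQ0sym : Q0ᵀ = Q0) (hQ0 : Q0.PosSemidef)
    (hR : Rᵀ = R) (hRpsd : R.PosSemidef) (hMP : IsMoorePenroseInv R Rd)
    (heq : X * A0 + A0ᵀ * X - X * B * Rd * Bᵀ * X + Q0 = 0)
    (hXBG : X * B * (1 - Rd * R) = 0) :
    Q0 * B * (1 - Rd * R) = 0 :=
  Q0_BG_eq_zero_general A0 X Q0 B R Rd hX hQ0 heq hXBG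
end

section
/- If X = X^T satisfies the constrained generalized continuous algebraic Riccati equation X A + A^T X − (S + XB) R† (S^T + B^T X) + Q = 0 with ker R ⊆ ker(S + XB), then X also satisfies X A₀ + A₀^T X − X B R† B^T X + Q₀ = 0 and X B G = 0, where A₀ = A − B R† S^T, Q₀ = Q − S R† S^T, and G = I − R† R. -/
/-!
The reduced equation is the CGCARE with its products expanded; the only input beyond
algebra is `R†ᵀ = R†`, which holds because `R†ᵀ` is again a Moore–Penrose inverse of
`Rᵀ = R` and that inverse is unique. For the second claim, `R G = 0`, so every column of `G`
lies in `ker R`, which is contained in `ker (S + XB)` by hypothesis and in `ker S` because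
`Π ⪰ 0`; hence `X B G = (S + X B) G - S G = 0`.
-/

open Matrix

namespace IsMoorePenroseInv

variable {m : ℕ} {R Y Z : Matrix (Fin m) (Fin m) ℝ}

theorem transpose (h : IsMoorePenroseInv R Y) : IsMoorePenroseInv Rᵀ Yᵀ := by
  obtain ⟨h₁, h₂, h₃, h₄⟩ := h
  refine ⟨?_, ?_, ?_, ?_⟩
  · rw [← transpose_mul, ← transpose_mul, ← Matrix.mul_assoc, h₁]
  · rw [← transpose_mul, ← transpose_mul, ← Matrix.mul_assoc, h₂]
  · rw [← transpose_mul, h₄, h₄]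
  · rw [← transpose_mul, h₃, h₃]

theorem mul_left_eq (hY : IsMoorePenroseInv R Y) (hZ : IsMoorePenroseInv R Z) :
    R * Y = R * Z :=
  calc R * Y = R * Z * (R * Y) := by rw [← Matrix.mul_assoc, hZ.1]
    _ = (R * Y * R * Z)ᵀ := by rw [Matrix.mul_assoc (R * Y), transpose_mul, hY.2.2.1, hZ.2.2.1]
    _ = R * Z := by rw [hY.1, hZ.2.2.1]

theorem mul_right_eq (hY : IsMoorePenroseInv R Y) (hZ : IsMoorePenroseInv R Z) :
    Y * R = Z * R := by
  simpa only [← transpose_mul, transpose_inj] using hY.transpose.mul_left_eq hZ.transpose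

theorem unique (hY : IsMoorePenroseInv R Y) (hZ : IsMoorePenroseInv R Z) : Y = Z :=
  calc Y = Y * R * Y := hY.2.1.symm
    _ = Z * R * Z := by rw [Matrix.mul_assoc, hY.mul_left_eq hZ, ← Matrix.mul_assoc,
      hY.mul_right_eq hZ]
    _ = Z := hZ.2.1

theorem transpose_eq_self (hR : Rᵀ = R) (h : IsMoorePenroseInv R Y) : Yᵀ = Y :=
  (hR ▸ h.transpose).unique h

end IsMoorePenroseInv

open scoped ComplexOrder in
theorem Matrix.PosSemidef.mulVec_eq_zero_of_fromBlocks {𝕜 : Type*} [RCLike 𝕜]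
    {n m : Type*} [Fintype n] [Fintype m] {A : Matrix n n 𝕜} {B : Matrix n m 𝕜}
    {C : Matrix m n 𝕜} {D : Matrix m m 𝕜} (h : (fromBlocks A B C D).PosSemidef)
    {v : m → 𝕜} (hv : D *ᵥ v = 0) : B *ᵥ v = 0 := by
  have hx : fromBlocks A B C D *ᵥ Sum.elim 0 v = Sum.elim (B *ᵥ v) 0 := by
    simp [fromBlocks_mulVec, hv]
  have hzero : fromBlocks A B C D *ᵥ Sum.elim 0 v = 0 := by
    rw [← h.dotProduct_mulVec_zero_iff, hx]
    simp [dotProduct]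
  funext i
  simpa using congrFun (hx.symm.trans hzero) (Sum.inl i)

theorem Matrix.mul_one_sub_mul_eq_zero_of_mulVec_eq_zero {α : Type*} [CommRing α]
    {l m : Type*} [Fintype m] [DecidableEq m] {R Rd : Matrix m m α} {M : Matrix l m α}
    (hR : R * Rd * R = R) (hM : ∀ v, R *ᵥ v = 0 → M *ᵥ v = 0) : M * (1 - Rd * R) = 0 := by
  refine ext_iff_mulVec.2 fun v => ?_
  rw [zero_mulVec, ← mulVec_mulVec]
  refine hM _ ?_
  rw [mulVec_mulVec, Matrix.mul_sub, Matrix.mul_one, ← Matrix.mul_assoc, hR, sub_self,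
    zero_mulVec]

theorem cgcare_reduced_form_general {n m : ℕ}
    (A Q X : Matrix (Fin n) (Fin n) ℝ) (B S : Matrix (Fin n) (Fin m) ℝ)
    (R Rd : Matrix (Fin m) (Fin m) ℝ)
    (hR : Rᵀ = R)
    (hMP : IsMoorePenroseInv R Rd)
    (hPi : (Matrix.fromBlocks Q S Sᵀ R).PosSemidef)
    (hric : X * A + Aᵀ * X - (S + X * B) * Rd * (Sᵀ + Bᵀ * X) + Q = 0)
    (hker : ∀ v : Fin m → ℝ, R *ᵥ v = 0 → (S + X * B) *ᵥ v = 0) :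
    X * (A - B * Rd * Sᵀ) + (A - B * Rd * Sᵀ)ᵀ * X - X * B * Rd * Bᵀ * X +
        (Q - S * Rd * Sᵀ) = 0 ∧
      X * B * (1 - Rd * R) = 0 := by
  have hRd : Rdᵀ = Rd := hMP.transpose_eq_self hR
  have hSXB : (S + X * B) * (1 - Rd * R) = 0 :=
    mul_one_sub_mul_eq_zero_of_mulVec_eq_zero hMP.1 hker
  have hS : S * (1 - Rd * R) = 0 :=
    mul_one_sub_mul_eq_zero_of_mulVec_eq_zero hMP.1 fun _ => hPi.mulVec_eq_zero_of_fromBlocks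
  refine ⟨?_, by rwa [Matrix.add_mul, hS, zero_add] at hSXB⟩
  rw [← hric, transpose_sub, transpose_mul, transpose_mul, transpose_transpose, hRd]
  simp only [Matrix.mul_sub, Matrix.sub_mul, Matrix.mul_add, Matrix.add_mul, Matrix.mul_assoc]
  abel

/-- If `X = Xᵀ` satisfies the CGCARE
`X A + Aᵀ X − (S + XB) R† (Sᵀ + Bᵀ X) + Q = 0` with `ker R ⊆ ker (S + XB)`,
then `X A₀ + A₀ᵀ X − X B R† Bᵀ X + Q₀ = 0` and `X B G = 0`, where
`A₀ = A − B R† Sᵀ`, `Q₀ = Q − S R† Sᵀ`, `G = I − R† R`. -/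
theorem cgcare_reduced_form {n m : ℕ}
    (A Q X : Matrix (Fin n) (Fin n) ℝ) (B S : Matrix (Fin n) (Fin m) ℝ)
    (R Rd : Matrix (Fin m) (Fin m) ℝ)
    (hQ : Qᵀ = Q) (hX : Xᵀ = X) (hR : Rᵀ = R) (hRpsd : R.PosSemidef)
    (hMP : IsMoorePenroseInv R Rd)
    (hPi : (Matrix.fromBlocks Q S Sᵀ R).PosSemidef)
    (hric : X * A + Aᵀ * X - (S + X * B) * Rd * (Sᵀ + Bᵀ * X) + Q = 0)
    (hker : ∀ v : Fin m → ℝ, R *ᵥ v = 0 → (S + X * B) *ᵥ v = 0) :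
    X * (A - B * Rd * Sᵀ) + (A - B * Rd * Sᵀ)ᵀ * X - X * B * Rd * Bᵀ * X +
        (Q - S * Rd * Sᵀ) = 0 ∧
      X * B * (1 - Rd * R) = 0 :=
  cgcare_reduced_form_general A Q X B S R Rd hR hMP hPi hric hker
end
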